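/- Let n ≥ 2, let m be an integer with 1 ≤ m ≤ n−2, let k ∈ {1,…,m}, and let c₁,…,c_k be real constants. Define h(r,π) = ½ ( Σ_{j=1}^{n−m} π_j π_{n−m+1−j} + Σ_{j=n−m+1}^{n} π_j π_{2n−m+1−j} ) + Σ_{j=1}^{k} c_j V_1^{(−j)}(φ(r)) on {r ∈ ℝⁿ : rⁿ ≠ 0} × ℝⁿ (note qⁿ(φ(r)) = −¼(rⁿ)² ≠ 0 there). Then r¹,…,r^{n−k} are cyclic variables for h: ∂h/∂r^i = 0 identically for every i ∈ {1,…,n−k}; equivalently, h Poisson-commutes with π₁,…,π_{n−k} with respect to the canonical Poisson bracket in the (r,π)-coordinates. -/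

import Mathlib

open Finset

noncomputable section

/-- Component of `v : Fin n → ℝ` with label `t ∈ {1,…,n}` (and `0` otherwise). -/
def get (n : ℕ) (v : Fin n → ℝ) (t : ℕ) : ℝ :=
  if h : 1 ≤ t ∧ t ≤ n then v ⟨t - 1, by omega⟩ else 0

/-- The unit vector in `Fin n → ℝ` with label `i ∈ {1,…,n}`. -/
def evec (n i : ℕ) : Fin n → ℝ := fun t => if (t : ℕ) + 1 = i then 1 else 0

/-- Canonical Poisson bracket on `(Fin n → ℝ) × (Fin n → ℝ)` (coordinates `(r, π)`). -/
def pbr (n : ℕ) (f g : (Fin n → ℝ) × (Fin n → ℝ) → ℝ)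
    (x : (Fin n → ℝ) × (Fin n → ℝ)) : ℝ :=
  ∑ j : Fin n,
    (fderiv ℝ f x (Pi.single j 1, 0) * fderiv ℝ g x (0, Pi.single j 1) -
      fderiv ℝ g x (Pi.single j 1, 0) * fderiv ℝ f x (0, Pi.single j 1))

/-- The map `φ : ℝⁿ → ℝⁿ`, `r ↦ q`. -/
def phi (n m : ℕ) (r : Fin n → ℝ) : Fin n → ℝ := fun i =>
  if (i : ℕ) + 1 ≤ n - m then
    r i + (1/4) * ∑ j ∈ Finset.Icc 1 ((i : ℕ) + 1 - 1), get n r j * get n r ((i : ℕ) + 1 - j)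
  else
    -(1/4) * ∑ j ∈ Finset.Icc ((i : ℕ) + 1) n, get n r j * get n r (n - j + ((i : ℕ) + 1))

/-- `φ(r)` extended to all labels, with `q⁰ = 1` and `q^i = 0` for `i > n`. -/
def qe (n m : ℕ) (r : Fin n → ℝ) (t : ℕ) : ℝ :=
  if t = 0 then 1 else get n (phi n m r) t

/-- Basic separable potentials with negative superscript: `Vneg n k r q = V_r^{(-k)}`.
`V_r^{(-1)} = -q^{r-1}/qⁿ`, `V_r^{(-k-1)} = V_{r-1}^{(-k)} + V_r^{(-1)} V_n^{(-k)}`. -/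
def Vneg (n : ℕ) : ℕ → ℕ → (ℕ → ℝ) → ℝ
  | 0, _, _ => 0
  | 1, r, q => -q (r-1) / q n
  | (k+2), r, q => Vneg n (k+1) (r-1) q + (-q (r-1) / q n) * Vneg n (k+1) n q

/-- The Hamiltonian `h(r,π) = ½(Σ_{j=1}^{n−m} π_j π_{n−m+1−j} +
Σ_{j=n−m+1}^{n} π_j π_{2n−m+1−j}) + Σ_{j=1}^{k} c_j V_1^{(−j)}(φ(r))`. -/
def ham (n m k : ℕ) (c : ℕ → ℝ) (x : (Fin n → ℝ) × (Fin n → ℝ)) : ℝ :=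
  (1/2) * (∑ j ∈ Finset.Icc 1 (n - m), get n x.2 j * get n x.2 (n - m + 1 - j) +
      ∑ j ∈ Finset.Icc (n - m + 1) n, get n x.2 j * get n x.2 (2 * n - m + 1 - j)) +
    ∑ j ∈ Finset.Icc 1 k, c j * Vneg n j 1 (qe n m x.1)


/-- Congruence for `Vneg` under agreement on indices `0` and `≥ n-k+1`. -/
lemma Vneg_congr (n k : ℕ) (hkn : k ≤ n) (q q' : ℕ → ℝ)
    (H : ∀ s, s = 0 ∨ n - k + 1 ≤ s → q s = q' s) :
    ∀ j, 1 ≤ j → j ≤ k → ∀ ρ, (ρ ≤ 1 ∨ n - k + 1 + j ≤ ρ) →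
      Vneg n j ρ q = Vneg n j ρ q' := by
  intro j
  induction j with
  | zero => omega
  | succ j ih =>
    intro h1 hjk ρ hρ
    cases j with
    | zero =>
      show Vneg n 1 ρ q = Vneg n 1 ρ q'
      simp only [Vneg]
      rw [H (ρ - 1) (by omega), H n (by omega)]
    | succ j' =>
      show Vneg n (j' + 2) ρ q = Vneg n (j' + 2) ρ q'
      simp only [Vneg]
      rw [ih (by omega) (by omega) (ρ - 1) (by omega),
        ih (by omega) (by omega) n (by omega),
        H (ρ - 1) (by omega), H n (by omega)]

lemma get_perturb (n i : ℕ) (r : Fin n → ℝ) (t : ℝ) (j : ℕ) (hji : j ≠ i) :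
    _root_.get n (r + t • evec n i) j = _root_.get n r j := by
  unfold _root_.get
  split
  · rename_i h
    have : (r + t • evec n i) ⟨j - 1, by omega⟩ = r ⟨j - 1, by omega⟩ := by
      simp only [Pi.add_apply, Pi.smul_apply, evec, smul_eq_mul]
      have : ¬ (j - 1 + 1 = i) := by omega
      simp [this]
    rw [this]
  · rfl

lemma qe_perturb (n m k i : ℕ) (hk : k ≤ m) (hi2 : i ≤ n - k)
    (r : Fin n → ℝ) (t : ℝ) :
    ∀ s, s = 0 ∨ n - k + 1 ≤ s → qe n m (r + t • evec n i) s = qe n m r s := by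
  intro s hs
  unfold qe
  rcases eq_or_ne s 0 with h0 | h0
  · simp [h0]
  have hs1 : n - k + 1 ≤ s := by omega
  rw [if_neg h0, if_neg h0]
  unfold _root_.get
  split
  · rename_i h
    have hlt : s - 1 < n := by omega
    show phi n m (r + t • evec n i) ⟨s - 1, hlt⟩ = phi n m r ⟨s - 1, hlt⟩
    unfold phi
    have hcond : ¬ ((⟨s - 1, hlt⟩ : Fin n) : ℕ) + 1 ≤ n - m := by
      simp only []
      omega
    rw [if_neg hcond, if_neg hcond]
    congr 1
    apply Finset.sum_congr rfl
    intro j hj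
    simp only [Finset.mem_Icc] at hj
    have hj' : (⟨s - 1, hlt⟩ : Fin n) + 1 = s := by simp; omega
    rw [get_perturb n i r t j (by omega), get_perturb n i r t _ (by omega)]
  · rfl

lemma fderiv_dir_eq_zero {E : Type*} [NormedAddCommGroup E] [NormedSpace ℝ E]
    (f : E → ℝ) (x v : E) (h : ∀ t : ℝ, f (x + t • v) = f x) :
    fderiv ℝ f x v = 0 := by
  by_cases hd : DifferentiableAt ℝ f x
  · have hline : HasDerivAt (fun t : ℝ => x + t • v) v 0 := by
      simpa using ((hasDerivAt_id (0 : ℝ)).smul_const v).const_add x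
    have hfd : HasFDerivAt f (fderiv ℝ f x) (x + (0 : ℝ) • v) := by
      simpa using hd.hasFDerivAt
    have h1 : HasDerivAt (fun t : ℝ => f (x + t • v)) (fderiv ℝ f x v) 0 :=
      hfd.comp_hasDerivAt 0 hline
    have h2 : HasDerivAt (fun t : ℝ => f (x + t • v)) 0 0 := by
      have he : (fun t : ℝ => f (x + t • v)) = fun _ => f x := funext h
      rw [he]; exact hasDerivAt_const _ _
    exact h1.unique h2
  · rw [fderiv_zero_of_not_differentiableAt hd]
    rfl

lemma ham_invariant (n m k : ℕ) (c : ℕ → ℝ) (i : ℕ)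
    (hk : k ≤ m) (hkn : k ≤ n) (hi2 : i ≤ n - k)
    (x : (Fin n → ℝ) × (Fin n → ℝ)) (t : ℝ) :
    ham n m k c (x + t • ((evec n i, 0) : (Fin n → ℝ) × (Fin n → ℝ))) = ham n m k c x := by
  have h1 : (x + t • ((evec n i, 0) : (Fin n → ℝ) × (Fin n → ℝ))).1
      = x.1 + t • evec n i := by simp
  have h2 : (x + t • ((evec n i, 0) : (Fin n → ℝ) × (Fin n → ℝ))).2 = x.2 := by simp
  unfold ham
  rw [h1, h2]
  congr 1
  apply Finset.sum_congr rfl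
  intro j hj
  simp only [Finset.mem_Icc] at hj
  congr 1
  exact Vneg_congr n k hkn _ _ (qe_perturb n m k i hk hi2 x.1 t) j hj.1 hj.2 1 (Or.inl le_rfl)

/-- for `1 ≤ m ≤ n−2` and `1 ≤ k ≤ m`, on the open set `rⁿ ≠ 0` the
variables `r¹,…,r^{n−k}` are cyclic for `h`: `∂h/∂r^i = 0` for `i ∈ {1,…,n−k}`;
equivalently `h` Poisson-commutes with `π₁,…,π_{n−k}`. -/
theorem cyclic_variables_negative_potentials
    (n : ℕ) (hn : 2 ≤ n) (m : ℕ) (hm1 : 1 ≤ m) (hm : m ≤ n - 2)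
    (k : ℕ) (hk : k ∈ Finset.Icc 1 m) (c : ℕ → ℝ)
    (i : ℕ) (hi : i ∈ Finset.Icc 1 (n - k)) :
    (∀ x : (Fin n → ℝ) × (Fin n → ℝ), get n x.1 n ≠ 0 →
      fderiv ℝ (ham n m k c) x (evec n i, 0) = 0) ∧
    (∀ x : (Fin n → ℝ) × (Fin n → ℝ), get n x.1 n ≠ 0 →
      pbr n (ham n m k c) (fun y => get n y.2 i) x = 0)  := by
  simp only [Finset.mem_Icc] at hk hi
  have hkn : k ≤ n := by omega
  have hpart1 : ∀ x : (Fin n → ℝ) × (Fin n → ℝ),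
      fderiv ℝ (ham n m k c) x (evec n i, 0) = 0 := by
    intro x
    exact fderiv_dir_eq_zero (ham n m k c) x (evec n i, 0)
      (ham_invariant n m k c i (by omega) hkn hi.2 x)
  have hlt : i - 1 < n := by omega
  refine ⟨fun x _ => hpart1 x, fun x _ => ?_⟩
  set F : ((Fin n → ℝ) × (Fin n → ℝ)) →L[ℝ] ℝ :=
    (ContinuousLinearMap.proj (⟨i - 1, hlt⟩ : Fin n)).comp
      (ContinuousLinearMap.snd ℝ (Fin n → ℝ) (Fin n → ℝ)) with hF
  have hg : (fun y : (Fin n → ℝ) × (Fin n → ℝ) => _root_.get n y.2 i) = F := by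
    funext y
    have hFy : (F y : ℝ) = y.2 ⟨i - 1, hlt⟩ := rfl
    rw [hFy]
    unfold _root_.get
    rw [dif_pos ⟨hi.1, by omega⟩]
  unfold pbr
  rw [hg]
  simp only [ContinuousLinearMap.fderiv]
  have hev : ∀ j : Fin n, (F ((0 : Fin n → ℝ), Pi.single j 1) : ℝ)
      = if (⟨i - 1, hlt⟩ : Fin n) = j then 1 else 0 := by
    intro j
    simp [hF, Pi.single_apply]
  have hev0 : ∀ j : Fin n, (F (Pi.single j 1, (0 : Fin n → ℝ)) : ℝ) = 0 := by
    intro j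
    simp [hF]
  have hsum : ∑ j : Fin n,
      (fderiv ℝ (ham n m k c) x (Pi.single j 1, 0) * F (0, Pi.single j 1) -
        F (Pi.single j 1, 0) * fderiv ℝ (ham n m k c) x (0, Pi.single j 1))
      = fderiv ℝ (ham n m k c) x (Pi.single (⟨i - 1, hlt⟩ : Fin n) 1, 0) := by
    simp only [hev, hev0, zero_mul, sub_zero, mul_ite, mul_one, mul_zero]
    rw [Finset.sum_ite_eq]
    simp
  rw [hsum]
  have hes : Pi.single (⟨i - 1, hlt⟩ : Fin n) (1 : ℝ) = evec n i := by
    funext s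
    simp only [Pi.single_apply, evec]
    by_cases hc : s = (⟨i - 1, hlt⟩ : Fin n)
    · rw [if_pos hc, if_pos]
      have : (s : ℕ) = i - 1 := by rw [hc]
      omega
    · rw [if_neg hc, if_neg]
      intro hcontra
      apply hc
      apply Fin.ext
      simp
      omega
  rw [hes]
  exact hpart1 x
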